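/- arXiv:2209.05721 — 3 statements merged into one kernel-verified Lean document; each statement's English description precedes it below -/
import Mathlib

section
/- For every real p with 1 < p ≤ 2 there exists a constant C > 0 depending only on p such that for all vectors a, b in R^n, ||a|^{p-2}a - |b|^{p-2}b| ≤ C·|a - b|^{p-1}. -/
open Real

private lemma scalar_gap (p s t : ℝ) (hp1 : 1 < p) (hp2 : p ≤ 2) (hs : 0 < s) (hst : s ≤ t) :
    (s ^ (p - 2) - t ^ (p - 2)) * s ≤ (2 - p) * t ^ (p - 2) * (t - s) := by
  have ht : 0 < t := hs.trans_le hst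
  have hq1 : (0:ℝ) ≤ 2 - p := by linarith
  have hq2 : (2:ℝ) - p ≤ 1 := by linarith
  have hx : (-1:ℝ) ≤ t / s - 1 := by
    have : (1:ℝ) ≤ t / s := (one_le_div hs).2 hst
    linarith
  have hb := rpow_one_add_le_one_add_mul_self hx hq1 hq2
  rw [add_sub_cancel] at hb
  have hdiv : (t / s) ^ (2 - p) = t ^ (2 - p) / s ^ (2 - p) :=
    Real.div_rpow ht.le hs.le _
  rw [hdiv] at hb
  set S := s ^ (2 - p) with hS
  set T := t ^ (2 - p) with hT
  have hSpos : 0 < S := Real.rpow_pos_of_pos hs _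
  have hTpos : 0 < T := Real.rpow_pos_of_pos ht _
  have key : T ≤ S + (2 - p) * S * ((t - s) / s) := by
    have h := mul_le_mul_of_nonneg_left hb hSpos.le
    rw [mul_div_cancel₀ _ hSpos.ne'] at h
    have e : S * (1 + (2 - p) * (t / s - 1)) = S + (2 - p) * S * ((t - s) / s) := by
      field_simp
    linarith [e ▸ h]
  have hsp : s ^ (p - 2) = S⁻¹ := by
    rw [hS, ← Real.rpow_neg hs.le]; ring_nf
  have htp : t ^ (p - 2) = T⁻¹ := by
    rw [hT, ← Real.rpow_neg ht.le]; ring_nf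
  rw [hsp, htp]
  have key2 : (T - S) * s ≤ (2 - p) * S * (t - s) := by
    have h := mul_le_mul_of_nonneg_right key hs.le
    have e : (S + (2 - p) * S * ((t - s) / s)) * s = S * s + (2 - p) * S * (t - s) := by
      field_simp
    nlinarith [e ▸ h]
  have e1 : (S⁻¹ - T⁻¹) * s = ((T - S) * s) * (S * T)⁻¹ := by field_simp
  have e2 : (2 - p) * T⁻¹ * (t - s) = ((2 - p) * S * (t - s)) * (S * T)⁻¹ := by
    field_simp
  rw [e1, e2]
  exact mul_le_mul_of_nonneg_right key2 (by positivity)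

private lemma norm_f (p : ℝ) (hp1 : 1 < p) {n : ℕ} (x : EuclideanSpace ℝ (Fin n)) :
    ‖(‖x‖ ^ (p - 2)) • x‖ = ‖x‖ ^ (p - 1) := by
  rw [norm_smul, Real.norm_eq_abs, abs_of_nonneg (Real.rpow_nonneg (norm_nonneg x) _)]
  rcases eq_or_ne x 0 with rfl | hx
  · simp [Real.zero_rpow (show p - 1 ≠ 0 by intro h; linarith [h]; )]
  · rw [← Real.rpow_add_one (norm_ne_zero_iff.2 hx)]
    ring_nf

private lemma half_bound (p : ℝ) (hp1 : 1 < p) (hp2 : p ≤ 2) (n : ℕ)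
    (a b : EuclideanSpace ℝ (Fin n)) (hba : ‖b‖ ≤ ‖a‖) :
    ‖(‖a‖ ^ (p - 2)) • a - (‖b‖ ^ (p - 2)) • b‖ ≤ 5 * ‖a - b‖ ^ (p - 1) := by
  rcases eq_or_ne a b with rfl | hab
  · simp [Real.zero_rpow (by linarith : p - 1 ≠ 0)]
  set d := ‖a - b‖ with hd
  have hdpos : 0 < d := norm_sub_pos_iff.2 hab
  set s := ‖b‖ with hsdef
  set t := ‖a‖ with htdef
  have hs0 : 0 ≤ s := norm_nonneg _
  have ht0 : 0 ≤ t := norm_nonneg _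
  have hts : t - s ≤ d := by
    have := norm_sub_norm_le a b; simpa using this
  have hp1' : (0:ℝ) ≤ p - 1 := by linarith
  have hdp : (0:ℝ) ≤ d ^ (p - 1) := Real.rpow_nonneg hdpos.le _
  rcases le_or_gt s (2 * d) with hcase | hcase
  · -- small s case
    have h1 : ‖(‖a‖ ^ (p - 2)) • a - (‖b‖ ^ (p - 2)) • b‖
        ≤ t ^ (p - 1) + s ^ (p - 1) := by
      calc ‖(‖a‖ ^ (p - 2)) • a - (‖b‖ ^ (p - 2)) • b‖
          ≤ ‖(‖a‖ ^ (p - 2)) • a‖ + ‖(‖b‖ ^ (p - 2)) • b‖ := norm_sub_le _ _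
        _ = t ^ (p - 1) + s ^ (p - 1) := by rw [norm_f p hp1, norm_f p hp1]
    have ht3 : t ≤ 3 * d := by linarith
    have h2 : t ^ (p - 1) ≤ (3 * d) ^ (p - 1) := Real.rpow_le_rpow ht0 ht3 hp1'
    have h3 : s ^ (p - 1) ≤ (2 * d) ^ (p - 1) := Real.rpow_le_rpow hs0 hcase hp1'
    have h4 : (3 * d) ^ (p - 1) = 3 ^ (p - 1) * d ^ (p - 1) :=
      Real.mul_rpow (by norm_num) hdpos.le
    have h5 : (2 * d) ^ (p - 1) = 2 ^ (p - 1) * d ^ (p - 1) :=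
      Real.mul_rpow (by norm_num) hdpos.le
    have h6 : (3:ℝ) ^ (p - 1) ≤ 3 := by
      calc (3:ℝ) ^ (p - 1) ≤ 3 ^ (1:ℝ) :=
        Real.rpow_le_rpow_of_exponent_le (by norm_num) (by linarith)
      _ = 3 := Real.rpow_one 3
    have h7 : (2:ℝ) ^ (p - 1) ≤ 2 := by
      calc (2:ℝ) ^ (p - 1) ≤ 2 ^ (1:ℝ) :=
        Real.rpow_le_rpow_of_exponent_le (by norm_num) (by linarith)
      _ = 2 := Real.rpow_one 2
    nlinarith [h1, h2, h3]
  · -- large s case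
    have hspos : 0 < s := by linarith
    have htpos : 0 < t := lt_of_lt_of_le hspos hba
    have h2d : (0:ℝ) < 2 * d := by linarith
    have hdec : (‖a‖ ^ (p - 2)) • a - (‖b‖ ^ (p - 2)) • b
        = (‖a‖ ^ (p - 2)) • (a - b) + (‖a‖ ^ (p - 2) - ‖b‖ ^ (p - 2)) • b := by
      rw [smul_sub, sub_smul]; abel
    have hnorm : ‖(‖a‖ ^ (p - 2)) • a - (‖b‖ ^ (p - 2)) • b‖
        ≤ t ^ (p - 2) * d + (s ^ (p - 2) - t ^ (p - 2)) * s := by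
      rw [hdec]
      refine (norm_add_le _ _).trans ?_
      rw [norm_smul, norm_smul, Real.norm_eq_abs, Real.norm_eq_abs,
        abs_of_nonneg (Real.rpow_nonneg ht0 _),
        abs_of_nonpos (by
          have : t ^ (p - 2) ≤ s ^ (p - 2) :=
            Real.rpow_le_rpow_of_nonpos hspos hba (by linarith)
          linarith)]
      have : -(t ^ (p - 2) - s ^ (p - 2)) = s ^ (p - 2) - t ^ (p - 2) := by ring
      rw [this]
    have hq : p - 2 ≤ 0 := by linarith
    have hbnd : t ^ (p - 2) ≤ (2 * d) ^ (p - 2) := by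
      refine Real.rpow_le_rpow_of_nonpos h2d (by linarith) hq
    have h2d' : (2 * d) ^ (p - 2) = 2 ^ (p - 2) * d ^ (p - 2) :=
      Real.mul_rpow (by norm_num) hdpos.le
    have h2le1 : (2:ℝ) ^ (p - 2) ≤ 1 :=
      Real.rpow_le_one_of_one_le_of_nonpos (by norm_num) hq
    have hdd : d ^ (p - 2) * d = d ^ (p - 1) := by
      rw [← Real.rpow_add_one hdpos.ne']; ring_nf
    have hdp2 : (0:ℝ) ≤ d ^ (p - 2) := Real.rpow_nonneg hdpos.le _
    have hterm1 : t ^ (p - 2) * d ≤ d ^ (p - 1) := by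
      calc t ^ (p - 2) * d ≤ (2 * d) ^ (p - 2) * d :=
            mul_le_mul_of_nonneg_right hbnd hdpos.le
        _ = 2 ^ (p - 2) * (d ^ (p - 2) * d) := by rw [h2d']; ring
        _ ≤ 1 * (d ^ (p - 2) * d) := by
            refine mul_le_mul_of_nonneg_right h2le1 (by positivity)
        _ = d ^ (p - 1) := by rw [one_mul, hdd]
    have hterm2 : (s ^ (p - 2) - t ^ (p - 2)) * s ≤ d ^ (p - 1) := by
      have hgap := scalar_gap p s t hp1 hp2 hspos hba
      have htp0 : (0:ℝ) ≤ t ^ (p - 2) := Real.rpow_nonneg ht0 _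
      have h2p01 : (0:ℝ) ≤ 2 - p := by linarith
      calc (s ^ (p - 2) - t ^ (p - 2)) * s ≤ (2 - p) * t ^ (p - 2) * (t - s) := hgap
        _ ≤ 1 * (t ^ (p - 2) * d) := by
            have hts0 : 0 ≤ t - s := by linarith
            have : (2 - p) * (t ^ (p - 2) * (t - s)) ≤ 1 * (t ^ (p - 2) * d) := by
              refine mul_le_mul (by linarith) (mul_le_mul_of_nonneg_left hts htp0)
                (by positivity) (by norm_num)
            linarith [this]
        _ = t ^ (p - 2) * d := one_mul _
        _ ≤ d ^ (p - 1) := hterm1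
    calc ‖(‖a‖ ^ (p - 2)) • a - (‖b‖ ^ (p - 2)) • b‖
        ≤ t ^ (p - 2) * d + (s ^ (p - 2) - t ^ (p - 2)) * s := hnorm
      _ ≤ d ^ (p - 1) + d ^ (p - 1) := add_le_add hterm1 hterm2
      _ ≤ 5 * d ^ (p - 1) := by linarith

theorem rpow_vector_diff_bound_le_two (p : ℝ) (hp1 : 1 < p) (hp2 : p ≤ 2) :
    ∃ C > (0 : ℝ), ∀ (n : ℕ) (a b : EuclideanSpace ℝ (Fin n)),
      ‖(‖a‖ ^ (p - 2)) • a - (‖b‖ ^ (p - 2)) • b‖ ≤ C * ‖a - b‖ ^ (p - 1) := by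
  refine ⟨5, by norm_num, fun n a b => ?_⟩
  rcases le_total ‖b‖ ‖a‖ with h | h
  · exact half_bound p hp1 hp2 n a b h
  · have := half_bound p hp1 hp2 n b a h
    rw [norm_sub_rev b a] at this
    calc ‖(‖a‖ ^ (p - 2)) • a - (‖b‖ ^ (p - 2)) • b‖
        = ‖(‖b‖ ^ (p - 2)) • b - (‖a‖ ^ (p - 2)) • a‖ := norm_sub_rev _ _
      _ ≤ 5 * ‖a - b‖ ^ (p - 1) := this
end

section
/- For p ∈ (1, ∞) and q ∈ (0, 1), the derivative of E_{1,p} satisfies (d/dq) E_{1,p}(q) = (E_{1,p}(q) - K_{1,p}(q)) / q. -/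
/-!
Differentiate under the integral sign: for `|x| < r < 1` and `z ∈ [0, 1]` the `x`-derivative
`-x z² (1 - x² z²)^(-1/2)` of the integrand of `E1` is bounded by `(1 - r²)^(-1/2)` times the weight
`(1 - z²)^(-1/p)`, which is integrable because `1/p < 1`. Multiplying the derivative by `q` gives
`(1 - q² z² - 1)(1 - q² z²)^(-1/2) = (1 - q² z²)^(1/2) - (1 - q² z²)^(-1/2)`,
the integrand of `E1 - K1`.
-/

open Real

/-- The complete `p`-elliptic integral of the first kind. -/
noncomputable def K1 (p q : ℝ) : ℝ :=
  ∫ z in (0:ℝ)..1, (1 - q ^ 2 * z ^ 2) ^ (-(1/2) : ℝ) * (1 - z ^ 2) ^ (-(1 / p))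

/-- The complete `p`-elliptic integral of the second kind. -/
noncomputable def E1 (p q : ℝ) : ℝ :=
  ∫ z in (0:ℝ)..1, (1 - q ^ 2 * z ^ 2) ^ ((1/2) : ℝ) * (1 - z ^ 2) ^ (-(1 / p))

open MeasureTheory intervalIntegral

lemma intervalIntegrable_one_sub_sq_rpow_neg {a : ℝ} (ha : a < 1) :
    IntervalIntegrable (fun z : ℝ => (1 - z ^ 2) ^ (-a)) volume 0 1 := by
  have hsing : IntervalIntegrable (fun z : ℝ => (1 - z) ^ (-a)) volume 0 1 := by
    simpa using ((intervalIntegrable_rpow' (a := 0) (b := 1) (r := -a)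
      (by linarith)).comp_sub_left 1).symm
  have hcont : ContinuousOn (fun z : ℝ => (1 + z) ^ (-a)) (Set.uIcc 0 1) := by
    intro z hz
    rw [Set.uIcc_of_le zero_le_one] at hz
    have : (1 : ℝ) + z ≠ 0 := by linarith [hz.1]
    exact (continuousAt_const.add continuousAt_id).rpow_const (Or.inl this) |>.continuousWithinAt
  refine (hsing.mul_continuousOn hcont).congr fun z hz => ?_
  rw [Set.uIoc_of_le zero_le_one] at hz
  rw [← mul_rpow (by linarith [hz.2]) (by linarith [hz.1])]
  congr 1
  ring

lemma sq_mul_sq_lt_sq {x z r : ℝ} (hxr : |x| < r) (hz : z ∈ Set.Icc (0 : ℝ) 1) :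
    x ^ 2 * z ^ 2 < r ^ 2 := by
  have hz2 : z ^ 2 ≤ 1 := by nlinarith [hz.1, hz.2]
  have hx2 : x ^ 2 < r ^ 2 := by nlinarith [sq_abs x, abs_nonneg x]
  nlinarith [sq_nonneg x, sq_nonneg z]

lemma rpow_half_sub_rpow_neg_half {u : ℝ} (hu : 0 ≤ u) :
    u ^ (1 / 2 : ℝ) - u ^ (-(1 / 2) : ℝ) = (u - 1) * u ^ (-(1 / 2) : ℝ) := by
  have hhalf : u ^ (1 / 2 : ℝ) = u * u ^ (-(1 / 2) : ℝ) := by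
    rw [← rpow_one_add' hu (by norm_num)]
    norm_num
  rw [hhalf, sub_one_mul]

lemma hasDerivAt_one_sub_sq_mul_rpow_half {x z : ℝ} (h : x ^ 2 * z ^ 2 < 1) :
    HasDerivAt (fun y : ℝ => (1 - y ^ 2 * z ^ 2) ^ (1 / 2 : ℝ))
      (-(x * z ^ 2) * (1 - x ^ 2 * z ^ 2) ^ (-(1 / 2) : ℝ)) x := by
  have hinner : HasDerivAt (fun y : ℝ => 1 - y ^ 2 * z ^ 2) (-(2 * x * z ^ 2)) x := by
    simpa using ((hasDerivAt_pow 2 x).mul_const (z ^ 2)).const_sub 1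
  convert hinner.rpow_const (p := 1 / 2) (Or.inl (by linarith)) using 1
  rw [show (1 / 2 : ℝ) - 1 = -(1 / 2) by norm_num]
  ring

lemma norm_deriv_one_sub_sq_mul_rpow_half_le {x z r : ℝ} (hxr : |x| < r) (hr : r < 1)
    (hz : z ∈ Set.Ioc (0 : ℝ) 1) :
    ‖-(x * z ^ 2) * (1 - x ^ 2 * z ^ 2) ^ (-(1 / 2) : ℝ)‖ ≤ (1 - r ^ 2) ^ (-(1 / 2) : ℝ) := by
  have hr2 : 0 < 1 - r ^ 2 := by nlinarith [abs_nonneg x]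
  have hle : 1 - r ^ 2 ≤ 1 - x ^ 2 * z ^ 2 := by
    linarith [sq_mul_sq_lt_sq hxr (Set.Ioc_subset_Icc_self hz)]
  have hpow : (1 - x ^ 2 * z ^ 2) ^ (-(1 / 2) : ℝ) ≤ (1 - r ^ 2) ^ (-(1 / 2) : ℝ) :=
    rpow_le_rpow_of_nonpos hr2 hle (by norm_num)
  have hnonneg : 0 ≤ (1 - x ^ 2 * z ^ 2) ^ (-(1 / 2) : ℝ) := rpow_nonneg (by linarith) _
  simp only [norm_mul, norm_neg, norm_pow, Real.norm_eq_abs, sq_abs, abs_of_nonneg hnonneg]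
  calc |x| * z ^ 2 * (1 - x ^ 2 * z ^ 2) ^ (-(1 / 2) : ℝ)
      ≤ 1 * (1 - r ^ 2) ^ (-(1 / 2) : ℝ) :=
        mul_le_mul (by nlinarith [abs_nonneg x, hz.1, hz.2]) hpow hnonneg zero_le_one
    _ = (1 - r ^ 2) ^ (-(1 / 2) : ℝ) := one_mul _

section
variable {w : ℝ → ℝ} {q : ℝ}

lemma intervalIntegrable_one_sub_sq_mul_rpow_mul (hw : IntervalIntegrable w volume 0 1)
    (hq : |q| < 1) (a : ℝ) :
    IntervalIntegrable (fun z => (1 - q ^ 2 * z ^ 2) ^ a * w z) volume 0 1 := by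
  refine hw.continuousOn_mul fun z hz => ?_
  rw [Set.uIcc_of_le zero_le_one] at hz
  have : 0 < 1 - q ^ 2 * z ^ 2 := by linarith [sq_mul_sq_lt_sq (r := 1) hq hz]
  exact (continuousAt_const.sub (continuousAt_const.mul (continuousAt_id.pow 2))).rpow_const
    (Or.inl this.ne') |>.continuousWithinAt

theorem hasDerivAt_integral_one_sub_sq_mul_rpow_half_mul
    (hw : IntervalIntegrable w volume 0 1) (hq : |q| < 1) :
    HasDerivAt (fun x => ∫ z in (0 : ℝ)..1, (1 - x ^ 2 * z ^ 2) ^ (1 / 2 : ℝ) * w z)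
      (∫ z in (0 : ℝ)..1, -(q * z ^ 2) * (1 - q ^ 2 * z ^ 2) ^ (-(1 / 2) : ℝ) * w z) q := by
  obtain ⟨r, hqr, hr⟩ := exists_between hq
  have hball : ∀ x ∈ Metric.ball q (r - |q|), |x| < r := fun x hx => by
    have := abs_sub_abs_le_abs_sub x q
    rw [Metric.mem_ball, Real.dist_eq] at hx
    linarith
  have hw_meas := hw.def'.aestronglyMeasurable
  refine (intervalIntegral.hasDerivAt_integral_of_dominated_loc_of_deriv_le
    (F := fun x z => (1 - x ^ 2 * z ^ 2) ^ (1 / 2 : ℝ) * w z)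
    (F' := fun x z => -(x * z ^ 2) * (1 - x ^ 2 * z ^ 2) ^ (-(1 / 2) : ℝ) * w z)
    (bound := fun z => (1 - r ^ 2) ^ (-(1 / 2) : ℝ) * ‖w z‖)
    (Metric.ball_mem_nhds q (sub_pos.2 hqr))
    (.of_forall fun x => (Measurable.aestronglyMeasurable (by fun_prop)).mul hw_meas)
    (intervalIntegrable_one_sub_sq_mul_rpow_mul hw hq _)
    ((Measurable.aestronglyMeasurable (by fun_prop)).mul hw_meas) ?_ (hw.norm.const_mul _) ?_).2
  · refine .of_forall fun z hz x hx => ?_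
    rw [Set.uIoc_of_le zero_le_one] at hz
    rw [norm_mul]
    gcongr
    exact norm_deriv_one_sub_sq_mul_rpow_half_le (hball x hx) hr hz
  · refine .of_forall fun z hz x hx => ?_
    rw [Set.uIoc_of_le zero_le_one] at hz
    have hxz : x ^ 2 * z ^ 2 < 1 := by
      nlinarith [sq_mul_sq_lt_sq (hball x hx) (Set.Ioc_subset_Icc_self hz), abs_nonneg q]
    exact (hasDerivAt_one_sub_sq_mul_rpow_half hxz).mul_const (w z)

end

theorem E1_hasDerivAt (p q : ℝ) (hp : 1 < p) (hq : q ∈ Set.Ioo (0:ℝ) 1) :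
    HasDerivAt (E1 p) ((E1 p q - K1 p q) / q) q := by
  obtain ⟨hq0, hq1⟩ := hq
  have hq_abs : |q| < 1 := by rwa [abs_of_pos hq0]
  have hw := intervalIntegrable_one_sub_sq_rpow_neg (a := 1 / p)
    (by rw [div_lt_one (by linarith)]; exact hp)
  refine (hasDerivAt_integral_one_sub_sq_mul_rpow_half_mul hw hq_abs).congr_deriv ?_
  rw [eq_div_iff hq0.ne', E1, K1, ← integral_sub
    (intervalIntegrable_one_sub_sq_mul_rpow_mul hw hq_abs _)
    (intervalIntegrable_one_sub_sq_mul_rpow_mul hw hq_abs _), ← intervalIntegral.integral_mul_const]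
  refine integral_congr fun z hz => ?_
  rw [Set.uIcc_of_le zero_le_one] at hz
  have hqz : 0 ≤ 1 - q ^ 2 * z ^ 2 := by linarith [sq_mul_sq_lt_sq (r := 1) hq_abs hz]
  simp only [← sub_mul, rpow_half_sub_rpow_neg_half hqz]
  ring
end

section
/- For p ∈ (1, ∞) and q ∈ (0, 1), the derivative of K_{1,p} satisfies (d/dq) K_{1,p}(q) = [(2 - 2/p)E_{1,p}(q) - (2 - 2/p - q²)K_{1,p}(q)] / (q(1 - q²)). -/
/-!
Differentiating under the integral sign gives `K' = q I` with
`I = ∫₀¹ z² (1 - q²z²)^(-3/2) (1 - z²)^(-1/p) dz`. The derivative of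
`z (1 - z²)^(1 - 1/p) (1 - q²z²)^(-1/2)`, which vanishes at `z = 0` and `z = 1`, integrates to
`(1 - q²) I = K - (2 - 2/p) J` with `J = ∫₀¹ z² (1 - q²z²)^(-1/2) (1 - z²)^(-1/p) dz`, and
`E = K - q² J` eliminates `J`.
-/

open Real

open MeasureTheory Set intervalIntegral Metric
open scoped Interval

noncomputable def secondMomentIntegral (s t q : ℝ) : ℝ :=
  ∫ z in (0:ℝ)..1, z ^ 2 * (1 - q ^ 2 * z ^ 2) ^ t * (1 - z ^ 2) ^ s

lemma neg_one_lt_neg_one_div {p : ℝ} (hp : 1 < p) : -1 < -(1 / p) := by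
  have := (div_lt_one (by linarith)).2 hp
  linarith

lemma one_sub_sq_mul_sq_pos {q z : ℝ} (hq : q ^ 2 < 1) (hz : z ^ 2 ≤ 1) :
    0 < 1 - q ^ 2 * z ^ 2 := by
  nlinarith [sq_nonneg q]

lemma intervalIntegrable_one_sub_sq_rpow {s : ℝ} (hs : -1 < s) :
    IntervalIntegrable (fun z : ℝ => (1 - z ^ 2) ^ s) volume 0 1 := by
  have hsing : IntervalIntegrable (fun z : ℝ => (1 - z) ^ s) volume 0 1 := by
    simpa using (intervalIntegrable_rpow' hs (a := 1) (b := 0)).comp_sub_left 1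
  have hreg : ContinuousOn (fun z : ℝ => (1 + z) ^ s) [[0, 1]] := by
    refine (continuous_const.add continuous_id).continuousOn.rpow_const fun z hz => Or.inl ?_
    rw [uIcc_of_le zero_le_one] at hz
    exact (by linarith [hz.1] : (0:ℝ) < 1 + z).ne'
  refine (hsing.continuousOn_mul hreg).congr fun z hz => ?_
  rw [uIoc_of_le zero_le_one] at hz
  have hfactor : 1 - z ^ 2 = (1 + z) * (1 - z) := by ring
  rw [hfactor, mul_rpow (by linarith [hz.1]) (by linarith [hz.2])]

lemma continuousOn_one_sub_sq_mul_sq_rpow {q : ℝ} (hq : q ^ 2 < 1) (t : ℝ) :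
    ContinuousOn (fun z : ℝ => (1 - q ^ 2 * z ^ 2) ^ t) [[0, 1]] := by
  refine (by fun_prop : Continuous fun z : ℝ => 1 - q ^ 2 * z ^ 2).continuousOn.rpow_const
    fun z hz => Or.inl (one_sub_sq_mul_sq_pos hq ?_).ne'
  rw [uIcc_of_le zero_le_one] at hz
  exact pow_le_one₀ hz.1 hz.2

lemma intervalIntegrable_rpow_mul_one_sub_sq_rpow {s q : ℝ} (hs : -1 < s) (hq : q ^ 2 < 1)
    (t : ℝ) :
    IntervalIntegrable (fun z : ℝ => (1 - q ^ 2 * z ^ 2) ^ t * (1 - z ^ 2) ^ s) volume 0 1 :=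
  (intervalIntegrable_one_sub_sq_rpow hs).continuousOn_mul
    (continuousOn_one_sub_sq_mul_sq_rpow hq t)

lemma intervalIntegrable_sq_mul_rpow_mul_one_sub_sq_rpow {s q : ℝ} (hs : -1 < s)
    (hq : q ^ 2 < 1) (t : ℝ) :
    IntervalIntegrable (fun z : ℝ => z ^ 2 * (1 - q ^ 2 * z ^ 2) ^ t * (1 - z ^ 2) ^ s)
      volume 0 1 :=
  (intervalIntegrable_one_sub_sq_rpow hs).continuousOn_mul
    ((continuous_pow 2).continuousOn.mul (continuousOn_one_sub_sq_mul_sq_rpow hq t))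

lemma hasDerivAt_one_sub_sq_mul_sq_rpow_neg_half {x z : ℝ} (h : 0 < 1 - x ^ 2 * z ^ 2) :
    HasDerivAt (fun y : ℝ => (1 - y ^ 2 * z ^ 2) ^ (-(1/2) : ℝ))
      (x * (z ^ 2 * (1 - x ^ 2 * z ^ 2) ^ (-(3/2) : ℝ))) x := by
  have hinner := ((hasDerivAt_pow 2 x).mul_const (z ^ 2)).const_sub 1
  convert hinner.rpow_const (p := -(1/2)) (Or.inl h.ne') using 1
  norm_num
  ring

theorem hasDerivAt_integral_one_sub_sq_mul_sq_rpow_neg_half_mul {w : ℝ → ℝ}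
    (hw : IntervalIntegrable w volume 0 1) {q : ℝ} (hq : |q| < 1) :
    HasDerivAt (fun x : ℝ => ∫ z in (0:ℝ)..1, (1 - x ^ 2 * z ^ 2) ^ (-(1/2) : ℝ) * w z)
      (∫ z in (0:ℝ)..1, q * (z ^ 2 * (1 - q ^ 2 * z ^ 2) ^ (-(3/2) : ℝ) * w z)) q := by
  obtain ⟨r, hqr, hr1⟩ := exists_between hq
  replace hqr : q ∈ ball (0:ℝ) r := by rwa [mem_ball_zero_iff, norm_eq_abs]
  have hlower : ∀ x ∈ ball (0:ℝ) r, ∀ z ∈ Ι (0:ℝ) 1,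
      0 < 1 - r ^ 2 ∧ 1 - r ^ 2 ≤ 1 - x ^ 2 * z ^ 2 ∧ |x| * z ^ 2 ≤ 1 := by
    intro x hx z hz
    rw [mem_ball_zero_iff, norm_eq_abs] at hx
    rw [uIoc_of_le zero_le_one] at hz
    have hx2 : x ^ 2 ≤ r ^ 2 := by nlinarith [sq_abs x, abs_nonneg x]
    have hz2 : z ^ 2 ≤ 1 := pow_le_one₀ hz.1.le hz.2
    exact ⟨by nlinarith [abs_nonneg x], by nlinarith [sq_nonneg x], by nlinarith [abs_nonneg x]⟩
  refine (hasDerivAt_integral_of_dominated_loc_of_deriv_le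
    (F := fun x z => (1 - x ^ 2 * z ^ 2) ^ (-(1/2) : ℝ) * w z)
    (F' := fun x z => x * (z ^ 2 * (1 - x ^ 2 * z ^ 2) ^ (-(3/2) : ℝ) * w z))
    (bound := fun z => (1 - r ^ 2) ^ (-(3/2) : ℝ) * |w z|) (isOpen_ball.mem_nhds hqr)
    (Filter.Eventually.of_forall fun x =>
      (by fun_prop : Measurable fun z : ℝ => (1 - x ^ 2 * z ^ 2) ^ (-(1/2) : ℝ)
        ).aestronglyMeasurable.mul hw.def'.aestronglyMeasurable)
    (hw.continuousOn_mul
      (continuousOn_one_sub_sq_mul_sq_rpow ((sq_lt_one_iff_abs_lt_one q).2 hq) _))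
    (((by fun_prop : Measurable fun z : ℝ => z ^ 2 * (1 - q ^ 2 * z ^ 2) ^ (-(3/2) : ℝ)
      ).aestronglyMeasurable.mul hw.def'.aestronglyMeasurable).const_mul q)
    (Filter.Eventually.of_forall fun z hz x hx => ?_) (hw.norm.const_mul _)
    (Filter.Eventually.of_forall fun z hz x hx => ?_)).2
  · obtain ⟨hr, hle, hxz⟩ := hlower x hx z hz
    have hdecay : (1 - x ^ 2 * z ^ 2) ^ (-(3/2) : ℝ) ≤ (1 - r ^ 2) ^ (-(3/2) : ℝ) :=
      rpow_le_rpow_of_nonpos hr hle (by norm_num)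
    have hnonneg : 0 ≤ (1 - x ^ 2 * z ^ 2) ^ (-(3/2) : ℝ) := rpow_nonneg (hr.trans_le hle).le _
    rw [norm_eq_abs, abs_mul, abs_mul, abs_mul, abs_of_nonneg hnonneg,
      abs_of_nonneg (sq_nonneg z), ← mul_assoc, ← mul_assoc]
    gcongr
    exact (mul_le_mul hxz hdecay hnonneg zero_le_one).trans_eq (one_mul _)
  · obtain ⟨hr, hle, -⟩ := hlower x hx z hz
    exact ((hasDerivAt_one_sub_sq_mul_sq_rpow_neg_half (hr.trans_le hle)).mul_const
      (w z)).congr_deriv (by ring)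

lemma hasDerivAt_mul_one_sub_sq_rpow_mul_rpow_neg_half {s q z : ℝ} (hz : 0 < 1 - z ^ 2)
    (hqz : 0 < 1 - q ^ 2 * z ^ 2) :
    HasDerivAt (fun y : ℝ => y * (1 - y ^ 2) ^ (s + 1) * (1 - q ^ 2 * y ^ 2) ^ (-(1/2) : ℝ))
      ((1 - q ^ 2 * z ^ 2) ^ (-(1/2) : ℝ) * (1 - z ^ 2) ^ s
        - 2 * (s + 1) * (z ^ 2 * (1 - q ^ 2 * z ^ 2) ^ (-(1/2) : ℝ) * (1 - z ^ 2) ^ s)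
        - (1 - q ^ 2) * (z ^ 2 * (1 - q ^ 2 * z ^ 2) ^ (-(3/2) : ℝ) * (1 - z ^ 2) ^ s)) z := by
  have hA := ((hasDerivAt_pow 2 z).const_sub 1).rpow_const (p := s + 1) (Or.inl hz.ne')
  have hB := (((hasDerivAt_pow 2 z).const_mul (q ^ 2)).const_sub 1).rpow_const (p := -(1/2))
    (Or.inl hqz.ne')
  refine (((hasDerivAt_id z).mul hA).mul hB).congr_deriv ?_
  have e1 : (1 - z ^ 2) ^ (s + 1) = (1 - z ^ 2) ^ s * (1 - z ^ 2) := rpow_add_one hz.ne' s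
  have e2 : (1 - q ^ 2 * z ^ 2) ^ (-(1/2) - 1 : ℝ) = (1 - q ^ 2 * z ^ 2) ^ (-(3/2) : ℝ) := by
    norm_num
  have e3 : (1 - q ^ 2 * z ^ 2) ^ (-(1/2) : ℝ) =
      (1 - q ^ 2 * z ^ 2) ^ (-(3/2) : ℝ) * (1 - q ^ 2 * z ^ 2) := by
    rw [← rpow_add_one hqz.ne']
    norm_num
  simp only [Pi.mul_apply, id_eq, add_sub_cancel_right, e1, e2, e3]
  ring

theorem one_sub_sq_mul_secondMomentIntegral {s q : ℝ} (hs : -1 < s) (hq : q ^ 2 < 1) :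
    (1 - q ^ 2) * secondMomentIntegral s (-(3/2)) q =
      (∫ z in (0:ℝ)..1, (1 - q ^ 2 * z ^ 2) ^ (-(1/2) : ℝ) * (1 - z ^ 2) ^ s)
        - 2 * (s + 1) * secondMomentIntegral s (-(1/2)) q := by
  have hK := intervalIntegrable_rpow_mul_one_sub_sq_rpow hs hq (-(1/2))
  have hJ := intervalIntegrable_sq_mul_rpow_mul_one_sub_sq_rpow hs hq (-(1/2))
  have hI := intervalIntegrable_sq_mul_rpow_mul_one_sub_sq_rpow hs hq (-(3/2))
  have hcont : ContinuousOn
      (fun y : ℝ => y * (1 - y ^ 2) ^ (s + 1) * (1 - q ^ 2 * y ^ 2) ^ (-(1/2) : ℝ))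
      (Icc 0 1) := by
    rw [← uIcc_of_le zero_le_one]
    refine (continuousOn_id.mul ?_).mul (continuousOn_one_sub_sq_mul_sq_rpow hq _)
    exact (by fun_prop : Continuous fun y : ℝ => 1 - y ^ 2).continuousOn.rpow_const
      fun _ _ => Or.inr (by linarith)
  have hFTC := integral_eq_sub_of_hasDerivAt_of_le zero_le_one hcont
    (fun z hz => hasDerivAt_mul_one_sub_sq_rpow_mul_rpow_neg_half
      (by nlinarith [hz.1, hz.2]) (one_sub_sq_mul_sq_pos hq (pow_le_one₀ hz.1.le hz.2.le)))
    ((hK.sub (hJ.const_mul _)).sub (hI.const_mul _))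
  rw [integral_sub (hK.sub (hJ.const_mul _)) (hI.const_mul _), integral_sub hK (hJ.const_mul _),
    intervalIntegral.integral_const_mul, intervalIntegral.integral_const_mul] at hFTC
  simp only [one_pow, sub_self, zero_rpow (by linarith : s + 1 ≠ 0), mul_zero, zero_mul,
    zero_pow two_ne_zero] at hFTC
  rw [secondMomentIntegral, secondMomentIntegral]
  linarith

lemma E1_eq_K1_sub_sq_mul_secondMomentIntegral {p q : ℝ} (hp : 1 < p) (hq : q ^ 2 < 1) :
    E1 p q = K1 p q - q ^ 2 * secondMomentIntegral (-(1 / p)) (-(1/2)) q := by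
  have hs := neg_one_lt_neg_one_div hp
  rw [E1, K1, secondMomentIntegral, ← intervalIntegral.integral_const_mul,
    ← integral_sub (intervalIntegrable_rpow_mul_one_sub_sq_rpow hs hq _)
      ((intervalIntegrable_sq_mul_rpow_mul_one_sub_sq_rpow hs hq _).const_mul _)]
  refine integral_congr fun z hz => ?_
  rw [uIcc_of_le zero_le_one] at hz
  have hu := one_sub_sq_mul_sq_pos hq (pow_le_one₀ hz.1 hz.2)
  have e : (1 - q ^ 2 * z ^ 2) ^ (1/2 : ℝ) =
      (1 - q ^ 2 * z ^ 2) ^ (-(1/2) : ℝ) * (1 - q ^ 2 * z ^ 2) := by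
    rw [← rpow_add_one hu.ne']
    norm_num
  simp only [e]
  ring

theorem K1_hasDerivAt (p q : ℝ) (hp : 1 < p) (hq : q ∈ Set.Ioo (0:ℝ) 1) :
    HasDerivAt (K1 p)
      (((2 - 2 / p) * E1 p q - (2 - 2 / p - q ^ 2) * K1 p q) / (q * (1 - q ^ 2))) q := by
  obtain ⟨hq0, hq1⟩ := hq
  have hs := neg_one_lt_neg_one_div hp
  have habs : |q| < 1 := by rwa [abs_of_pos hq0]
  have hq2 : q ^ 2 < 1 := (sq_lt_one_iff_abs_lt_one q).2 habs
  have hderiv : HasDerivAt (K1 p) (q * secondMomentIntegral (-(1 / p)) (-(3/2)) q) q := by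
    rw [secondMomentIntegral, ← intervalIntegral.integral_const_mul]
    exact hasDerivAt_integral_one_sub_sq_mul_sq_rpow_neg_half_mul
      (intervalIntegrable_one_sub_sq_rpow hs) habs
  have hE := E1_eq_K1_sub_sq_mul_secondMomentIntegral hp hq2
  have hIBP : (1 - q ^ 2) * secondMomentIntegral (-(1 / p)) (-(3/2)) q =
      K1 p q - 2 * (-(1 / p) + 1) * secondMomentIntegral (-(1 / p)) (-(1/2)) q :=
    one_sub_sq_mul_secondMomentIntegral hs hq2
  convert hderiv using 1
  rw [div_eq_iff (by nlinarith)]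
  linear_combination (2 - 2 / p) * hE - q ^ 2 * hIBP
end
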